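/- arXiv:math/0601109 — 2 statements merged into one kernel-verified Lean document; each statement's English description precedes it below -/
import Mathlib

section
/- Let A be an invertible N×N complex matrix, b ∈ ℂ^N, and let F : ℂ^N → ℂ^N be the affine map F(z) = Az + b. Then for every bounded set E ⊆ ℂ^N, d_∞(F⁻¹(E)) = |det A|^{-1/N} · d_∞(E). -/
/-!
If `F z = A z + b`, then `p ↦ p ∘ F` is a linear endomorphism of the space of polynomials of
degree `≤ n`, and the Vandermonde matrix `(e_i(F ζ_j))` is the product of its matrix (in the
monomial basis) with `(e_i(ζ_j))`. So `det (e_i(F ζ_j))` is `det (e_i(ζ_j))` times the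
determinant of `p ↦ p ∘ F`, which is multiplicative in `F`. For a diagonal `A = diag d` it is
`∏_α ∏_k d_k ^ α_k = (∏_k d_k) ^ binom(N+n, N+1)`. A translation or a transvection `T` is
conjugate, by a dilation, to `T ∘ T`, so its determinant `x` is a unit with `x² = x`, i.e. `1`.
Since diagonal matrices and transvections generate all matrices, the determinant is
`det A ^ binom(N+n, N+1)`, and then `d_n(F⁻¹ E) = |det A| ^ (-binom(N+n, N+1) / D(n)) · d_n(E)`
with `D(n) = N · binom(N+n, N+1)`.
-/

/-- The Fekete–Leja transfinite diameter of a set `E ⊆ ℂ^N`: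
`d_∞(E) = limsup_n d_n(E)`, where `d_n(E)` is the supremum, over tuples of points of `E`
indexed by the monomials of degree `≤ n` in `N` variables, of the absolute value of the
Vandermonde-type determinant `det (e_i(ζ_j))`, raised to the power `1 / D(n)` with
`D(n) = N * binom(N+n, N+1)`. -/
noncomputable def transfiniteDiameter (N : ℕ) (E : Set (Fin N → ℂ)) : ℝ :=
  Filter.limsup (fun n : ℕ =>
    (sSup {x : ℝ |
        ∃ ζ : {α : Fin N → Fin (n + 1) // (∑ k, (α k : ℕ)) ≤ n} → (Fin N → ℂ),
          (∀ j, ζ j ∈ E) ∧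
          x = norm
              (Matrix.det (Matrix.of
                (fun (i j : {α : Fin N → Fin (n + 1) // (∑ k, (α k : ℕ)) ≤ n}) =>
                  ∏ k, (ζ j k) ^ (i.1 k : ℕ))))})
      ^ ((1 : ℝ) / ((N * Nat.choose (N + n) (N + 1) : ℕ) : ℝ)))
    Filter.atTop

open Finset MvPolynomial
open scoped Matrix Pointwise

abbrev MonomialIdx (N n : ℕ) := {α : Fin N → Fin (n + 1) // (∑ k, (α k : ℕ)) ≤ n}

theorem Nat.sum_range_sub_add_choose (n N : ℕ) :
    ∑ a ∈ range (n + 1), (n - a + N).choose N = (n + N + 1).choose (N + 1) := by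
  have h := sum_range_reflect (fun a => (a + N).choose N) (n + 1)
  simp only [add_tsub_cancel_right] at h
  rw [h, Nat.sum_range_add_choose]

theorem Nat.sum_range_mul_sub_add_choose (n N : ℕ) :
    ∑ a ∈ range (n + 1), a * (n - a + N).choose N = (n + N + 1).choose (N + 2) := by
  induction n with
  | zero => simp
  | succ n ih =>
    rw [sum_range_succ', show n + 1 + N + 1 = n + N + 1 + 1 by ring, Nat.choose_succ_succ',
      ← ih, ← Nat.sum_range_sub_add_choose, ← sum_add_distrib]
    simp only [zero_mul, add_zero]
    refine sum_congr rfl fun a _ => ?_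
    rw [show n + 1 - (a + 1) = n - a by omega]
    ring

namespace MonomialIdx

theorem sum_tail_le_sub_head {N n : ℕ} (α : MonomialIdx (N + 1) n) :
    ∑ k : Fin N, (α.1 k.succ : ℕ) ≤ n - α.1 0 := by
  have := α.2
  rw [Fin.sum_univ_succ] at this
  omega

def consEquiv (N n : ℕ) :
    MonomialIdx (N + 1) n ≃ Σ a : Fin (n + 1), MonomialIdx N (n - a) where
  toFun α := ⟨α.1 0, fun k => ⟨α.1 k.succ, Nat.lt_succ_of_le <|
      (single_le_sum (fun i _ => Nat.zero_le _) (mem_univ k)).trans α.sum_tail_le_sub_head⟩,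
    α.sum_tail_le_sub_head⟩
  invFun p := ⟨Fin.cons p.1 fun k => ⟨p.2.1 k, by have := (p.2.1 k).isLt; omega⟩, by
    have := p.2.2; simp only [Fin.sum_univ_succ, Fin.cons_zero, Fin.cons_succ]; omega⟩
  left_inv α := by ext k; cases k using Fin.cases <;> simp
  right_inv p := Sigma.ext rfl <| heq_of_eq <| by ext; simp

def permCongr {N n : ℕ} (σ : Equiv.Perm (Fin N)) : MonomialIdx N n ≃ MonomialIdx N n :=
  (σ.arrowCongr (Equiv.refl _)).subtypeEquiv fun α => by
    simp [Equiv.sum_comp σ.symm (fun k => (α k : ℕ))]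

theorem card_eq (N n : ℕ) : Fintype.card (MonomialIdx N n) = (n + N).choose N := by
  induction N generalizing n with
  | zero =>
    rw [Nat.choose_zero_right, Fintype.card_eq_one_iff]
    exact ⟨⟨finZeroElim, by simp⟩, fun α => Subtype.ext (funext finZeroElim)⟩
  | succ N ih =>
    rw [Fintype.card_congr (consEquiv N n), Fintype.card_sigma,
      Fin.sum_univ_eq_sum_range (fun a => Fintype.card (MonomialIdx N (n - a)))]
    simp only [ih]
    rw [Nat.sum_range_sub_add_choose, add_assoc]

theorem sum_apply_eq_choose {N : ℕ} (n : ℕ) (k : Fin N) :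
    ∑ α : MonomialIdx N n, (α.1 k : ℕ) = (N + n).choose (N + 1) := by
  obtain ⟨N, rfl⟩ : ∃ M, N = M + 1 := ⟨N - 1, by have := k.pos; omega⟩
  calc ∑ α : MonomialIdx (N + 1) n, (α.1 k : ℕ)
      = ∑ α : MonomialIdx (N + 1) n, (α.1 0 : ℕ) :=
        ((permCongr (Equiv.swap 0 k)).sum_comp (fun α => (α.1 k : ℕ))).symm.trans <| by
          simp [permCongr]
    _ = ∑ p : Σ a : Fin (n + 1), MonomialIdx N (n - a), (p.1 : ℕ) :=
        ((consEquiv N n).symm.sum_comp _).symm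
    _ = ∑ a : Fin (n + 1), (a : ℕ) * (n - a + N).choose N := by
        rw [← univ_sigma_univ, sum_sigma]
        simp [card_eq, mul_comm]
    _ = (N + 1 + n).choose (N + 1 + 1) := by
        rw [Fin.sum_univ_eq_sum_range (fun a => a * (n - a + N).choose N),
          Nat.sum_range_mul_sub_add_choose]
        ring_nf

noncomputable def toFinsupp {N n : ℕ} (α : MonomialIdx N n) : Fin N →₀ ℕ :=
  Finsupp.equivFunOnFinite.symm fun k => α.1 k

noncomputable def equivDegreeLE (N n : ℕ) :
    MonomialIdx N n ≃ {d : Fin N →₀ ℕ | (d.sum fun _ e => e) ≤ n} where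
  toFun α := ⟨α.toFinsupp, by simpa [toFinsupp, Finsupp.sum_fintype] using α.2⟩
  invFun d := ⟨fun k => ⟨d.1 k, Nat.lt_succ_of_le <| (Finsupp.le_degree k d.1).trans d.2⟩, by
    show ∑ k, d.1 k ≤ n
    exact (Finsupp.degree_eq_sum d.1).symm.trans_le d.2⟩
  left_inv α := by ext; simp [toFinsupp]
  right_inv d := by ext; simp [toFinsupp]

end MonomialIdx

theorem MvPolynomial.totalDegree_aeval_le {σ τ R : Type*} [CommSemiring R]
    (f : σ → MvPolynomial τ R) (hf : ∀ i, (f i).totalDegree ≤ 1) (p : MvPolynomial σ R) :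
    (aeval f p).totalDegree ≤ p.totalDegree := by
  conv_lhs => rw [p.as_sum, map_sum]
  refine (totalDegree_finsetSum _ _).trans <| Finset.sup_mono_fun fun d _ => ?_
  rw [aeval_monomial]
  refine (totalDegree_mul _ _).trans ?_
  rw [algebraMap_eq, totalDegree_C, zero_add]
  refine (totalDegree_finsetProd _ _).trans <| Finset.sum_le_sum fun i _ => ?_
  exact (totalDegree_pow _ _).trans (by simpa using Nat.mul_le_mul_left (d i) (hf i))

theorem MvPolynomial.basisRestrictSupport_apply {σ R : Type*} [CommSemiring R]
    {s : Set (σ →₀ ℕ)} (d : s) :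
    (basisRestrictSupport R s d : MvPolynomial σ R) = monomial d 1 := by
  classical
  rw [← Module.Basis.repr_symm_single_one]
  ext e
  rw [coeff_monomial]
  exact (DFunLike.congr_fun (Finsupp.supportedEquivFinsupp_symm_single (R := R) s d 1) e).trans
    Finsupp.single_apply

section Vandermonde
variable {K : Type*} [CommRing K] {N n : ℕ}

noncomputable def monomialBasis (K : Type*) [CommRing K] (N n : ℕ) :
    Module.Basis (MonomialIdx N n) K (restrictTotalDegree (Fin N) K n) :=
  (basisRestrictSupport K _).reindex (MonomialIdx.equivDegreeLE N n).symm

theorem monomialBasis_apply (α : MonomialIdx N n) :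
    (monomialBasis K N n α : MvPolynomial (Fin N) K) = monomial α.toFinsupp 1 :=
  (congrArg Subtype.val <| (basisRestrictSupport K _).reindex_apply
    (MonomialIdx.equivDegreeLE N n).symm α).trans (basisRestrictSupport_apply _)

theorem eval_monomial_toFinsupp (z : Fin N → K) (α : MonomialIdx N n) :
    eval z (monomial α.toFinsupp 1) = ∏ k, z k ^ (α.1 k : ℕ) := by
  rw [eval_monomial, one_mul, Finsupp.prod_fintype _ _ (fun _ => pow_zero _)]
  rfl

noncomputable def degLESubst (n : ℕ) (f : Fin N → MvPolynomial (Fin N) K)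
    (hf : ∀ i, (f i).totalDegree ≤ 1) :
    restrictTotalDegree (Fin N) K n →ₗ[K] restrictTotalDegree (Fin N) K n :=
  (aeval f).toLinearMap.restrict fun p hp => (mem_restrictTotalDegree _ _ _).mpr <|
    (totalDegree_aeval_le f hf p).trans ((mem_restrictTotalDegree _ _ _).mp hp)

theorem degLESubst_comp {f g h : Fin N → MvPolynomial (Fin N) K}
    (hf : ∀ i, (f i).totalDegree ≤ 1) (hg : ∀ i, (g i).totalDegree ≤ 1)
    (hh : ∀ i, (h i).totalDegree ≤ 1) (hfg : ∀ i, aeval g (f i) = h i) :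
    degLESubst n g hg ∘ₗ degLESubst n f hf = degLESubst n h hh := by
  ext p : 2
  change aeval g (aeval f p.1) = aeval h p.1
  rw [comp_aeval_apply]
  exact congrArg (aeval · p.1) (funext hfg)

noncomputable def evalPoints {ι : Type*} (n : ℕ) (ζ : ι → Fin N → K) :
    restrictTotalDegree (Fin N) K n →ₗ[K] (ι → K) :=
  LinearMap.pi fun j => (aeval (ζ j)).toLinearMap ∘ₗ (restrictTotalDegree (Fin N) K n).subtype

noncomputable def monomialVandermonde (ζ : MonomialIdx N n → Fin N → K) :
    Matrix (MonomialIdx N n) (MonomialIdx N n) K :=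
  Matrix.of fun α j => ∏ k, ζ j k ^ (α.1 k : ℕ)

theorem toMatrix_evalPoints (ζ : MonomialIdx N n → Fin N → K) :
    LinearMap.toMatrix (monomialBasis K N n) (Pi.basisFun K _) (evalPoints n ζ) =
      (monomialVandermonde ζ)ᵀ := by
  ext j α
  rw [LinearMap.toMatrix_apply, Pi.basisFun_repr]
  change aeval (ζ j) (monomialBasis K N n α : MvPolynomial (Fin N) K) = _
  rw [monomialBasis_apply]
  exact eval_monomial_toFinsupp (ζ j) α

theorem evalPoints_comp_degLESubst (f : Fin N → MvPolynomial (Fin N) K)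
    (hf : ∀ i, (f i).totalDegree ≤ 1) (F : (Fin N → K) → Fin N → K)
    (hF : ∀ z i, eval z (f i) = F z i) {ι : Type*} (ζ : ι → Fin N → K) :
    evalPoints n ζ ∘ₗ degLESubst n f hf = evalPoints n (fun j => F (ζ j)) := by
  ext p j
  change aeval (ζ j) (aeval f p.1) = aeval (F (ζ j)) p.1
  rw [comp_aeval_apply]
  exact congrArg (aeval · p.1) (funext (hF (ζ j)))

theorem det_monomialVandermonde_comp (f : Fin N → MvPolynomial (Fin N) K)
    (hf : ∀ i, (f i).totalDegree ≤ 1) (F : (Fin N → K) → Fin N → K)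
    (hF : ∀ z i, eval z (f i) = F z i) (ζ : MonomialIdx N n → Fin N → K) :
    (monomialVandermonde fun j => F (ζ j)).det =
      LinearMap.det (degLESubst n f hf) * (monomialVandermonde ζ).det := by
  rw [← Matrix.det_transpose, ← toMatrix_evalPoints, ← evalPoints_comp_degLESubst f hf F hF,
    LinearMap.toMatrix_comp _ (monomialBasis K N n), Matrix.det_mul, toMatrix_evalPoints,
    Matrix.det_transpose, LinearMap.det_toMatrix, mul_comm]

end Vandermonde

theorem Matrix.diagonal_mul_transvection_mul_diagonal {n R : Type*} [Fintype n] [DecidableEq n]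
    [CommRing R]
    {d d' : n → R} (hd : ∀ k, d k * d' k = 1) (i j : n) (c : R) :
    diagonal d * transvection i j c * diagonal d' = transvection i j (d i * c * d' j) := by
  ext k l
  simp only [transvection, mul_diagonal, diagonal_mul, add_apply, one_apply, single_apply]
  split_ifs with h1 h2 h2 <;> grind

section Affine
variable {K : Type*} [CommRing K] {N : ℕ}

noncomputable def affineSubst (A : Matrix (Fin N) (Fin N) K) (b : Fin N → K) :
    Fin N → MvPolynomial (Fin N) K :=
  fun i => ∑ j, C (A i j) * X j + C (b i)

theorem totalDegree_affineSubst_le (A : Matrix (Fin N) (Fin N) K) (b : Fin N → K) (i : Fin N) :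
    (affineSubst A b i).totalDegree ≤ 1 := by
  refine (totalDegree_add _ _).trans (max_le (totalDegree_finsetSum_le fun j _ => ?_) ?_)
  · refine (totalDegree_mul _ _).trans ?_
    rw [totalDegree_C, zero_add, X]
    exact (totalDegree_monomial_le _ _).trans_eq (Finsupp.sum_single_index rfl)
  · simp

theorem eval_affineSubst (A : Matrix (Fin N) (Fin N) K) (b z : Fin N → K) (i : Fin N) :
    eval z (affineSubst A b i) = (A *ᵥ z + b) i := by
  simp [affineSubst, Matrix.mulVec, dotProduct]

theorem eval_aeval_affineSubst (A : Matrix (Fin N) (Fin N) K) (b z : Fin N → K)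
    (p : MvPolynomial (Fin N) K) :
    eval z (aeval (affineSubst A b) p) = eval (A *ᵥ z + b) p := by
  change aeval z (aeval (affineSubst A b) p) = aeval (A *ᵥ z + b) p
  rw [comp_aeval_apply]
  exact congrArg (aeval · p) (funext (eval_affineSubst A b z))

end Affine

section AffineDet
variable {K : Type*} [Field K] [CharZero K] {N : ℕ}

theorem aeval_affineSubst_affineSubst (A A' : Matrix (Fin N) (Fin N) K) (b b' : Fin N → K)
    (i : Fin N) :
    aeval (affineSubst A' b') (affineSubst A b i) = affineSubst (A * A') (A *ᵥ b' + b) i :=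
  MvPolynomial.funext fun z => by
    rw [eval_aeval_affineSubst, eval_affineSubst, eval_affineSubst, Matrix.mulVec_add,
      Matrix.mulVec_mulVec, add_assoc]

theorem affineSubst_one_zero : affineSubst (1 : Matrix (Fin N) (Fin N) K) 0 = X :=
  funext fun i => MvPolynomial.funext fun z => by simp [eval_affineSubst]

noncomputable def affineSubstDet (n : ℕ) (A : Matrix (Fin N) (Fin N) K) (b : Fin N → K) : K :=
  LinearMap.det (degLESubst n (affineSubst A b) (totalDegree_affineSubst_le A b))

variable {n : ℕ}

theorem affineSubstDet_mul (A A' : Matrix (Fin N) (Fin N) K) (b b' : Fin N → K) :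
    affineSubstDet n A b * affineSubstDet n A' b' = affineSubstDet n (A * A') (A *ᵥ b' + b) := by
  rw [affineSubstDet, affineSubstDet, affineSubstDet, mul_comm, ← LinearMap.det_comp,
    degLESubst_comp _ _ _ (aeval_affineSubst_affineSubst A A' b b')]

theorem affineSubstDet_one_zero : affineSubstDet n (1 : Matrix (Fin N) (Fin N) K) 0 = 1 := by
  have h : degLESubst n _ (totalDegree_affineSubst_le (1 : Matrix (Fin N) (Fin N) K) 0) =
      LinearMap.id := by
    ext p : 2
    change aeval _ p.1 = p.1
    rw [affineSubst_one_zero, aeval_X_left_apply]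
  rw [affineSubstDet, h, LinearMap.det_id]

theorem degLESubst_diagonal_monomialBasis (d : Fin N → K) (α : MonomialIdx N n) :
    degLESubst n (affineSubst (Matrix.diagonal d) 0) (totalDegree_affineSubst_le _ 0)
      (monomialBasis K N n α) = (∏ k, d k ^ (α.1 k : ℕ)) • monomialBasis K N n α := by
  apply Subtype.ext
  rw [Submodule.coe_smul, smul_eq_C_mul]
  refine MvPolynomial.funext fun z => ?_
  change eval z (aeval _ (monomialBasis K N n α : MvPolynomial (Fin N) K)) = _
  simp only [eval_aeval_affineSubst, monomialBasis_apply, eval_monomial_toFinsupp, eval_mul,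
    eval_C, Matrix.mulVec_diagonal, add_zero, mul_pow, prod_mul_distrib]

theorem affineSubstDet_diagonal (d : Fin N → K) :
    affineSubstDet n (Matrix.diagonal d) 0 = (∏ k, d k) ^ (N + n).choose (N + 1) := by
  rw [affineSubstDet, ← LinearMap.det_toMatrix (monomialBasis K N n)]
  have h : LinearMap.toMatrix (monomialBasis K N n) (monomialBasis K N n)
      (degLESubst n _ (totalDegree_affineSubst_le (Matrix.diagonal d) 0)) =
      Matrix.diagonal fun α : MonomialIdx N n => ∏ k, d k ^ (α.1 k : ℕ) := by
    ext α β
    simp only [LinearMap.toMatrix_apply, degLESubst_diagonal_monomialBasis, map_smul,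
      Module.Basis.repr_self, Finsupp.smul_single, smul_eq_mul, mul_one, Finsupp.single_apply,
      eq_comm, Matrix.diagonal_apply]
    split_ifs with h
    · rw [h]
    · rfl
  rw [h, Matrix.det_diagonal, prod_comm]
  simp_rw [prod_pow_eq_pow_sum, MonomialIdx.sum_apply_eq_choose, prod_pow]

theorem affineSubstDet_mul_zero (A A' : Matrix (Fin N) (Fin N) K) :
    affineSubstDet n A 0 * affineSubstDet n A' 0 = affineSubstDet n (A * A') 0 := by
  rw [affineSubstDet_mul, Matrix.mulVec_zero, add_zero]

theorem affineSubstDet_diagonal_mul_diagonal {d d' : Fin N → K} (hd : ∀ k, d k * d' k = 1) :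
    affineSubstDet n (Matrix.diagonal d) 0 * affineSubstDet n (Matrix.diagonal d') 0 = 1 := by
  rw [affineSubstDet_mul_zero, Matrix.diagonal_mul_diagonal, funext hd, Matrix.diagonal_one,
    affineSubstDet_one_zero]

theorem affineSubstDet_one (b : Fin N → K) : affineSubstDet n 1 b = 1 := by
  set D : Matrix (Fin N) (Fin N) K := Matrix.diagonal fun _ => 2
  set D' : Matrix (Fin N) (Fin N) K := Matrix.diagonal fun _ => 2⁻¹
  have hD : ∀ k : Fin N, (2 : K) * 2⁻¹ = 1 := fun _ => mul_inv_cancel₀ two_ne_zero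
  have hunit : affineSubstDet n 1 b * affineSubstDet n 1 (-b) = 1 := by
    rw [affineSubstDet_mul, Matrix.one_mul, Matrix.one_mulVec, neg_add_cancel,
      affineSubstDet_one_zero]
  have hsq : affineSubstDet n 1 b * affineSubstDet n 1 b = affineSubstDet n 1 b :=
    calc _ = affineSubstDet n (D * 1 * D') ((D * 1) *ᵥ 0 + (D *ᵥ b + 0)) := by
          rw [affineSubstDet_mul]
          congr 1
          · simp [D, D', Matrix.diagonal_mul_diagonal]
          · ext k
            simp [D, two_mul]
      _ = affineSubstDet n D 0 * affineSubstDet n 1 b * affineSubstDet n D' 0 := by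
          rw [affineSubstDet_mul, affineSubstDet_mul]
      _ = affineSubstDet n 1 b := by
          rw [mul_right_comm, affineSubstDet_diagonal_mul_diagonal hD, one_mul]
  exact (mul_eq_left₀ (left_ne_zero_of_mul_eq_one hunit)).mp hsq

theorem affineSubstDet_transvection (t : Matrix.TransvectionStruct (Fin N) K) :
    affineSubstDet n t.toMatrix 0 = 1 := by
  set d := Function.update (1 : Fin N → K) t.i 2
  set d' := Function.update (1 : Fin N → K) t.i 2⁻¹
  have hd : ∀ k, d k * d' k = 1 := fun k => by
    rcases eq_or_ne k t.i with rfl | h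
    · simp [d, d']
    · simp [d, d', h]
  have hunit : affineSubstDet n t.toMatrix 0 *
      affineSubstDet n (Matrix.transvection t.i t.j (-t.c)) 0 = 1 := by
    rw [affineSubstDet_mul_zero, Matrix.TransvectionStruct.toMatrix,
      Matrix.transvection_mul_transvection_same (h := t.hij), add_neg_cancel,
      Matrix.transvection_zero, affineSubstDet_one_zero]
  have hsq : affineSubstDet n t.toMatrix 0 * affineSubstDet n t.toMatrix 0 =
      affineSubstDet n t.toMatrix 0 :=
    calc _ = affineSubstDet n (Matrix.diagonal d) 0 * affineSubstDet n t.toMatrix 0 *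
          affineSubstDet n (Matrix.diagonal d') 0 := by
          rw [affineSubstDet_mul_zero, affineSubstDet_mul_zero, affineSubstDet_mul_zero,
            Matrix.TransvectionStruct.toMatrix,
            Matrix.transvection_mul_transvection_same (h := t.hij),
            Matrix.diagonal_mul_transvection_mul_diagonal hd]
          simp [d, d', t.hij.symm, two_mul]
      _ = affineSubstDet n t.toMatrix 0 := by
          rw [mul_right_comm, affineSubstDet_diagonal_mul_diagonal hd, one_mul]
  exact (mul_eq_left₀ (left_ne_zero_of_mul_eq_one hunit)).mp hsq

theorem affineSubstDet_eq (A : Matrix (Fin N) (Fin N) K) (b : Fin N → K) :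
    affineSubstDet n A b = A.det ^ (N + n).choose (N + 1) := by
  have hlin : affineSubstDet n A 0 = A.det ^ (N + n).choose (N + 1) := by
    induction A using Matrix.diagonal_transvection_induction with
    | hdiag d _ => rw [affineSubstDet_diagonal, Matrix.det_diagonal]
    | htransvec t => rw [affineSubstDet_transvection, t.det, one_pow]
    | hmul A A' hA hA' =>
      rw [Matrix.det_mul, mul_pow, ← hA, ← hA', affineSubstDet_mul_zero]
  rw [← hlin, ← one_mul (affineSubstDet n A 0), ← affineSubstDet_one b, affineSubstDet_mul,
    Matrix.one_mul, Matrix.one_mulVec, zero_add]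

theorem det_monomialVandermonde_affine (A : Matrix (Fin N) (Fin N) K) (b : Fin N → K)
    (ζ : MonomialIdx N n → Fin N → K) :
    (monomialVandermonde fun j => A *ᵥ ζ j + b).det =
      A.det ^ (N + n).choose (N + 1) * (monomialVandermonde ζ).det := by
  rw [det_monomialVandermonde_comp _ (totalDegree_affineSubst_le A b) _ (eval_affineSubst A b),
    ← affineSubstDet, affineSubstDet_eq]

end AffineDet

theorem Real.limsup_const_mul {α : Type*} {f : Filter α} {c : ℝ} (hc : 0 < c) (u : α → ℝ) :
    Filter.limsup (fun x => c * u x) f = c * Filter.limsup u f := by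
  have hset :
      {a : ℝ | ∀ᶠ x in f, c * u x ≤ a} = c • {a : ℝ | ∀ᶠ x in f, u x ≤ a} := by
    ext a
    refine ⟨fun ha => ⟨a / c, ?_, mul_div_cancel₀ a hc.ne'⟩, ?_⟩
    · filter_upwards [ha] with x hx
      exact (le_div_iff₀' hc).mpr hx
    · rintro ⟨y, hy, rfl⟩
      filter_upwards [hy] with x hx
      exact mul_le_mul_of_nonneg_left hx hc.le
  rw [Filter.limsup_eq, Filter.limsup_eq, hset, Real.sInf_smul_of_nonneg hc.le, smul_eq_mul]

section TransfiniteDiameter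
variable {N : ℕ}

def vandermondeNorms (N n : ℕ) (E : Set (Fin N → ℂ)) : Set ℝ :=
  {x | ∃ ζ : MonomialIdx N n → Fin N → ℂ,
    (∀ j, ζ j ∈ E) ∧ x = ‖(monomialVandermonde ζ).det‖}

noncomputable def nthDiameter (N : ℕ) (E : Set (Fin N → ℂ)) (n : ℕ) : ℝ :=
  sSup (vandermondeNorms N n E) ^ ((1 : ℝ) / ((N * (N + n).choose (N + 1) : ℕ) : ℝ))

theorem transfiniteDiameter_eq_limsup (E : Set (Fin N → ℂ)) :
    transfiniteDiameter N E = Filter.limsup (nthDiameter N E) Filter.atTop := rfl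

theorem vandermondeNorms_affine_preimage (n : ℕ) {A : Matrix (Fin N) (Fin N) ℂ} (hA : IsUnit A)
    (b : Fin N → ℂ) (E : Set (Fin N → ℂ)) :
    vandermondeNorms N n ((fun z => A *ᵥ z + b) ⁻¹' E) =
      (‖A.det‖ ^ (N + n).choose (N + 1))⁻¹ • vandermondeNorms N n E := by
  have hc : ‖A.det‖ ^ (N + n).choose (N + 1) ≠ 0 :=
    pow_ne_zero _ (norm_ne_zero_iff.mpr ((Matrix.isUnit_iff_isUnit_det A).mp hA).ne_zero)
  have hnorm (ζ : MonomialIdx N n → Fin N → ℂ) : ‖(monomialVandermonde ζ).det‖ =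
      (‖A.det‖ ^ (N + n).choose (N + 1))⁻¹ *
        ‖(monomialVandermonde fun j => A *ᵥ ζ j + b).det‖ := by
    rw [det_monomialVandermonde_affine, norm_mul, norm_pow, inv_mul_cancel_left₀ hc]
  ext x
  constructor
  · rintro ⟨ζ, hζ, rfl⟩
    exact ⟨_, ⟨_, hζ, rfl⟩, (hnorm ζ).symm⟩
  · rintro ⟨_, ⟨η, hη, rfl⟩, rfl⟩
    have hsurj : Function.Surjective fun z => A *ᵥ z + b :=
      fun y => (Matrix.mulVec_surjective_iff_isUnit.mpr hA (y - b)).imp fun z hz => by simp [hz]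
    choose ζ hζ using fun j => hsurj (η j)
    refine ⟨ζ, fun j => by simp only [Set.mem_preimage, hζ j, hη j], ?_⟩
    rw [hnorm ζ, show (fun j => A *ᵥ ζ j + b) = η from funext hζ]
    rfl

theorem nthDiameter_affine_preimage {n : ℕ} (hn : 1 ≤ n) {A : Matrix (Fin N) (Fin N) ℂ}
    (hA : IsUnit A) (b : Fin N → ℂ) (E : Set (Fin N → ℂ)) :
    nthDiameter N ((fun z => A *ᵥ z + b) ⁻¹' E) n =
      ‖A.det‖ ^ (-(1 : ℝ) / N) * nthDiameter N E n := by
  have hC : ((N + n).choose (N + 1) : ℝ) ≠ 0 :=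
    Nat.cast_ne_zero.mpr (Nat.choose_pos (by omega)).ne'
  have hdet : 0 ≤ ‖A.det‖ := norm_nonneg _
  have hsup : 0 ≤ sSup (vandermondeNorms N n E) :=
    Real.sSup_nonneg fun x ⟨_, _, hx⟩ => hx ▸ norm_nonneg _
  rw [nthDiameter, nthDiameter, vandermondeNorms_affine_preimage n hA,
    Real.sSup_smul_of_nonneg (by positivity), smul_eq_mul, Real.mul_rpow (by positivity) hsup,
    ← Real.rpow_natCast, ← Real.rpow_neg hdet, ← Real.rpow_mul hdet, Nat.cast_mul,
    mul_one_div, ← mul_div_mul_right (-1 : ℝ) (N : ℝ) hC, neg_one_mul]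

end TransfiniteDiameter

theorem transfiniteDiameter_affine_preimage_general
    (N : ℕ) (A : Matrix (Fin N) (Fin N) ℂ) (hA : IsUnit A)
    (b : Fin N → ℂ) (E : Set (Fin N → ℂ)) :
    transfiniteDiameter N ((fun z => A.mulVec z + b) ⁻¹' E)
      = ‖A.det‖ ^ (-(1 : ℝ) / (N : ℝ)) * transfiniteDiameter N E := by
  have hc : 0 < ‖A.det‖ ^ (-(1 : ℝ) / (N : ℝ)) := Real.rpow_pos_of_pos
    (norm_pos_iff.mpr ((Matrix.isUnit_iff_isUnit_det A).mp hA).ne_zero) _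
  rw [transfiniteDiameter_eq_limsup, transfiniteDiameter_eq_limsup, ← Real.limsup_const_mul hc]
  exact Filter.limsup_congr <| Filter.eventually_atTop.mpr
    ⟨1, fun n hn => nthDiameter_affine_preimage hn hA b E⟩

/-- Sheĭnov's formula: for an invertible affine map `F(z) = Az + b` of `ℂ^N` and any
bounded set `E ⊆ ℂ^N`, `d_∞(F⁻¹E) = |det A|^{-1/N} · d_∞(E)`. -/
theorem transfiniteDiameter_affine_preimage
    (N : ℕ) (hN : 0 < N) (A : Matrix (Fin N) (Fin N) ℂ) (hA : IsUnit A)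
    (b : Fin N → ℂ) (E : Set (Fin N → ℂ)) (hE : Bornology.IsBounded E) :
    transfiniteDiameter N ((fun z => A.mulVec z + b) ⁻¹' E)
      = ‖A.det‖ ^ (-(1 : ℝ) / (N : ℝ)) * transfiniteDiameter N E :=
  transfiniteDiameter_affine_preimage_general N A hA b E
end

section
/- Let F : ℂ^N → ℂ^N be a map whose components are polynomials of degree at most d, and let F_h be the map whose components are the degree-d homogeneous parts of the components of F. Then F_h⁻¹{0} = {0} if and only if liminf_{‖z‖→∞} ‖F(z)‖ / ‖z‖^d > 0, where ‖·‖ is the Euclidean norm on ℂ^N. -/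
/-- The Euclidean norm on `ℂ^N`. -/
noncomputable def eucNorm {N : ℕ} (z : Fin N → ℂ) : ℝ :=
  Real.sqrt (∑ i, ‖z i‖ ^ 2)

/-!
Move to `EuclideanSpace ℂ (Fin N)` and split `F = F_h + G`, where `F_h` is continuous and
homogeneous of degree `d` and `G`, a sum of homogeneous maps of lower degree, is `o(‖z‖^d)`.
Homogeneity gives `‖F_h z‖ / ‖z‖^d = ‖F_h (z / ‖z‖)‖`, so by compactness of the unit sphere this
quotient is bounded, and bounded below by a positive constant when `F_h` has no zero on the sphere;
then `F = Θ(‖z‖^d)`. Conversely, along a ray `c • z₀` with `F_h z₀ = 0` the quotient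
`‖F z‖ / ‖z‖^d = ‖G z‖ / ‖z‖^d` tends to `0`.
-/

open Filter Bornology Asymptotics Topology Finset

theorem liminf_norm_div_pos_of_isTheta {α E : Type*} [NormedAddCommGroup E] {l : Filter α}
    [l.NeBot] {f : α → E} {g : α → ℝ} (h : f =Θ[l] g) (hg : ∀ᶠ x in l, 0 < g x) :
    0 < liminf (fun x => ‖f x‖ / g x) l := by
  obtain ⟨c, hc, hlow⟩ := h.isBigO_symm.exists_pos
  obtain ⟨C, hup⟩ := h.isBigO.bound
  have hbdd : IsCoboundedUnder (· ≥ ·) l (fun x => ‖f x‖ / g x) := by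
    refine isCoboundedUnder_ge_of_eventually_le l (x := C) ?_
    filter_upwards [hup, hg] with x hx hgx
    rw [div_le_iff₀ hgx]
    simpa [abs_of_pos hgx] using hx
  refine (inv_pos.2 hc).trans_le (le_liminf_of_le hbdd ?_)
  filter_upwards [hlow.bound, hg] with x hx hgx
  rw [le_div_iff₀ hgx, ← div_eq_inv_mul, div_le_iff₀ hc]
  simpa [abs_of_pos hgx, mul_comm] using hx

theorem tendsto_smul_cobounded {𝕜 V : Type*} [NormedField 𝕜] [NormedAddCommGroup V]
    [NormedSpace 𝕜 V] {x : V} (hx : x ≠ 0) :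
    Tendsto (fun c : 𝕜 => c • x) (cobounded 𝕜) (cobounded V) := by
  rw [← tendsto_norm_atTop_iff_cobounded]
  simp_rw [norm_smul]
  exact tendsto_norm_cobounded_atTop.atTop_mul_const (norm_pos_iff.2 hx)

section Homogeneous

variable {𝕜 V W : Type*} [RCLike 𝕜] [NormedAddCommGroup V] [NormedSpace 𝕜 V]
  [NormedAddCommGroup W] [NormedSpace 𝕜 W] {f : V → W} {d : ℕ}

theorem norm_eq_norm_smul_inv_norm_mul_pow (hf : ∀ (c : 𝕜) x, f (c • x) = c ^ d • f x)
    {x : V} (hx : x ≠ 0) : ‖f x‖ = ‖f ((‖x‖⁻¹ : 𝕜) • x)‖ * ‖x‖ ^ d := by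
  have hx' : (‖x‖ : 𝕜) ≠ 0 := RCLike.ofReal_ne_zero.2 (norm_ne_zero_iff.2 hx)
  conv_lhs => rw [← smul_inv_smul₀ hx' x, hf]
  rw [norm_smul, norm_pow, RCLike.norm_ofReal, abs_norm, mul_comm]

theorem isBigO_norm_pow_of_homogeneous [ProperSpace V] (hcont : Continuous f)
    (hf : ∀ (c : 𝕜) x, f (c • x) = c ^ d • f x) :
    f =O[cobounded V] (fun x => ‖x‖ ^ d) := by
  obtain ⟨M, hM⟩ :=
    (isCompact_sphere (0 : V) 1).exists_bound_of_continuousOn hcont.continuousOn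
  refine IsBigO.of_bound M ?_
  filter_upwards [eventually_ne_cobounded 0] with x hx
  rw [norm_eq_norm_smul_inv_norm_mul_pow hf hx, norm_pow, norm_norm]
  exact mul_le_mul_of_nonneg_right (hM _ (by simpa using norm_smul_inv_norm (𝕜 := 𝕜) hx))
    (by positivity)

theorem norm_pow_isBigO_of_homogeneous [ProperSpace V] (hcont : Continuous f)
    (hf : ∀ (c : 𝕜) x, f (c • x) = c ^ d • f x) (hzero : ∀ x, f x = 0 → x = 0) :
    (fun x => ‖x‖ ^ d) =O[cobounded V] f := by
  obtain ⟨m, hm, hmin⟩ :=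
    (isCompact_sphere (0 : V) 1).exists_forall_le' hcont.norm.continuousOn (a := 0)
      fun x hx => norm_pos_iff.2 fun h => by simp [hzero x h] at hx
  refine IsBigO.of_bound m⁻¹ ?_
  filter_upwards [eventually_ne_cobounded 0] with x hx
  rw [norm_eq_norm_smul_inv_norm_mul_pow hf hx, norm_pow, norm_norm, ← mul_assoc,
    le_mul_iff_one_le_left (by positivity), one_le_inv_mul₀ hm]
  exact hmin _ (by simpa using norm_smul_inv_norm (𝕜 := 𝕜) hx)

theorem preimage_zero_eq_singleton_iff_liminf_pos [ProperSpace V] [Nontrivial V] {g : V → W}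
    (hd : d ≠ 0) (hcont : Continuous f) (hf : ∀ (c : 𝕜) x, f (c • x) = c ^ d • f x)
    (hg : g =o[cobounded V] (fun x => ‖x‖ ^ d)) :
    f ⁻¹' {0} = {0} ↔ 0 < liminf (fun x => ‖f x + g x‖ / ‖x‖ ^ d) (cobounded V) := by
  have hf0 : f 0 = 0 := by rw [← zero_smul 𝕜 (0 : V), hf, zero_pow hd, zero_smul]
  constructor
  · intro hzero
    have : NeBot (cobounded V) := NormedSpace.cobounded_neBot 𝕜 V
    have hΘ : f =Θ[cobounded V] (fun x => ‖x‖ ^ d) :=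
      ⟨isBigO_norm_pow_of_homogeneous hcont hf,
        norm_pow_isBigO_of_homogeneous hcont hf fun x hx => by simpa using hzero.subset hx⟩
    refine liminf_norm_div_pos_of_isTheta (hΘ.add_isLittleO hg) ?_
    filter_upwards [eventually_ne_cobounded 0] with x hx
    positivity
  · intro hpos
    refine Set.Subset.antisymm (fun x (hx : f x = 0) => ?_) (by simpa using hf0)
    by_contra hx0
    have hray := tendsto_smul_cobounded (𝕜 := 𝕜) hx0
    have hlim : Tendsto (fun c : 𝕜 => ‖f (c • x) + g (c • x)‖ / ‖c • x‖ ^ d)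
        (cobounded 𝕜) (𝓝 0) := by
      simp only [hf, hx, smul_zero, zero_add]
      exact (hg.comp_tendsto hray).norm_left.norm_right.tendsto_div_nhds_zero.congr
        fun c => by simp
    have hle := hray.liminf_le_liminf_comp (u := fun x => ‖f x + g x‖ / ‖x‖ ^ d)
      hlim.isCoboundedUnder_ge
      (isBoundedUnder_of_eventually_ge (a := 0) (.of_forall fun _ => by positivity))
    rw [Function.comp_def, hlim.liminf_eq] at hle
    exact hle.not_gt hpos

end Homogeneous

theorem MvPolynomial.IsHomogeneous.eval_smul {σ R : Type*} [CommSemiring R]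
    {φ : MvPolynomial σ R} {n : ℕ} (hφ : φ.IsHomogeneous n) (c : R) (x : σ → R) :
    eval (c • x) φ = c ^ n * eval x φ := by
  rw [eval_eq, eval_eq, mul_sum]
  refine sum_congr rfl fun s hs => ?_
  simp only [Pi.smul_apply, smul_eq_mul, mul_pow, prod_mul_distrib, prod_pow_eq_pow_sum,
    ← hφ.degree_eq_sum_deg_support hs]
  ring

theorem MvPolynomial.sum_homogeneousComponent_of_totalDegree_le {σ R : Type*} [CommSemiring R]
    {φ : MvPolynomial σ R} {n : ℕ} (h : φ.totalDegree ≤ n) :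
    ∑ k ∈ range (n + 1), homogeneousComponent k φ = φ := by
  rw [← sum_subset (range_subset_range.2 (Nat.succ_le_succ h)), sum_homogeneousComponent]
  intro k _ hk
  exact homogeneousComponent_eq_zero _ _ (by simpa using hk)

section PolynomialMap

variable {𝕜 σ ι : Type*} [RCLike 𝕜]

noncomputable def polynomialMap (P : ι → MvPolynomial σ 𝕜) (x : EuclideanSpace 𝕜 σ) :
    EuclideanSpace 𝕜 ι :=
  WithLp.toLp 2 fun i => MvPolynomial.eval (WithLp.ofLp x) (P i)

theorem continuous_polynomialMap (P : ι → MvPolynomial σ 𝕜) : Continuous (polynomialMap P) :=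
  (PiLp.continuous_toLp 2 _).comp <| continuous_pi fun _ =>
    (MvPolynomial.continuous_eval _).comp (PiLp.continuous_ofLp 2 _)

theorem polynomialMap_smul {P : ι → MvPolynomial σ 𝕜} {n : ℕ}
    (hP : ∀ i, (P i).IsHomogeneous n) (c : 𝕜) (x : EuclideanSpace 𝕜 σ) :
    polynomialMap P (c • x) = c ^ n • polynomialMap P x := by
  ext i
  simp [polynomialMap, (hP i).eval_smul]

theorem polynomialMap_eq_sum_homogeneousComponent {P : ι → MvPolynomial σ 𝕜} {n : ℕ}
    (hP : ∀ i, (P i).totalDegree ≤ n) :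
    polynomialMap P =
      ∑ k ∈ range (n + 1), polynomialMap fun i => MvPolynomial.homogeneousComponent k (P i) := by
  ext x i
  simp [polynomialMap, ← map_sum, MvPolynomial.sum_homogeneousComponent_of_totalDegree_le (hP i)]

theorem isLittleO_polynomialMap_of_isHomogeneous [Fintype σ] [Fintype ι]
    {P : ι → MvPolynomial σ 𝕜} {k n : ℕ} (hP : ∀ i, (P i).IsHomogeneous k) (hk : k < n) :
    polynomialMap P =o[cobounded _] (fun x => ‖x‖ ^ n) :=
  (isBigO_norm_pow_of_homogeneous (continuous_polynomialMap P)
    (polynomialMap_smul hP)).trans_isLittleO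
      ((isLittleO_pow_pow_atTop_of_lt hk).comp_tendsto tendsto_norm_cobounded_atTop)

end PolynomialMap

theorem eucNorm_eq_norm {N : ℕ} (z : Fin N → ℂ) :
    eucNorm z = ‖(WithLp.toLp 2 z : EuclideanSpace ℂ (Fin N))‖ := by
  simp [eucNorm, EuclideanSpace.norm_eq]

theorem liminf_comap_eucNorm {N : ℕ} (u : (Fin N → ℂ) → ℝ) :
    liminf u (comap eucNorm atTop) =
      liminf (fun x : EuclideanSpace ℂ (Fin N) => u (WithLp.ofLp x)) (cobounded _) := by
  have h : (eucNorm : (Fin N → ℂ) → ℝ) = norm ∘ (WithLp.equiv 2 (Fin N → ℂ)).symm :=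
    funext eucNorm_eq_norm
  rw [h, ← comap_comap, comap_norm_atTop, comap_equiv_symm]
  rfl

/-- Characterization of regularity: for a map `F : ℂ^N → ℂ^N` whose components are
polynomials of degree at most `d`, with leading part `F_h` (the degree-`d` homogeneous
parts), `F_h⁻¹{0} = {0}` if and only if `liminf_{‖z‖→∞} ‖F(z)‖/‖z‖^d > 0`. -/
theorem regular_iff_liminf_pos
    (N : ℕ) (hN : 0 < N) (d : ℕ) (hd : 1 ≤ d)
    (P : Fin N → MvPolynomial (Fin N) ℂ)
    (hdeg : ∀ i, (P i).totalDegree ≤ d)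
    (F Fh : (Fin N → ℂ) → (Fin N → ℂ))
    (hF : F = fun z => fun i => MvPolynomial.eval z (P i))
    (hFh : Fh = fun z => fun i =>
        MvPolynomial.eval z (MvPolynomial.homogeneousComponent d (P i))) :
    Fh ⁻¹' {0} = ({0} : Set (Fin N → ℂ))
      ↔ 0 < Filter.liminf (fun z : Fin N → ℂ => eucNorm (F z) / eucNorm z ^ d)
          (Filter.comap eucNorm Filter.atTop) := by
  have : Nonempty (Fin N) := ⟨⟨0, hN⟩⟩
  have hsplit : polynomialMap P =
      polynomialMap (fun i => MvPolynomial.homogeneousComponent d (P i)) +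
        ∑ k ∈ range d, polynomialMap fun i => MvPolynomial.homogeneousComponent k (P i) := by
    rw [polynomialMap_eq_sum_homogeneousComponent hdeg, sum_range_succ, add_comm]
  have hremainder :
      (∑ k ∈ range d, polynomialMap fun i => MvPolynomial.homogeneousComponent k (P i))
        =o[cobounded _] (fun x => ‖x‖ ^ d) :=
    IsLittleO.sum fun k hk => isLittleO_polynomialMap_of_isHomogeneous
      (fun i => MvPolynomial.homogeneousComponent_isHomogeneous k (P i)) (mem_range.1 hk)
  have key := preimage_zero_eq_singleton_iff_liminf_pos (by omega) (continuous_polynomialMap _)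
    (polynomialMap_smul fun i => MvPolynomial.homogeneousComponent_isHomogeneous d (P i))
    hremainder
  subst hF hFh
  rw [liminf_comap_eucNorm]
  convert key using 1
  · rw [← (WithLp.equiv 2 (Fin N → ℂ)).surjective.preimage_injective.eq_iff]
    congr! 1 <;> ext x <;> simp [polynomialMap]
  · simp_rw [eucNorm_eq_norm, ← Pi.add_apply, ← hsplit]
    rfl
end
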